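/- The equator ψ(x,y) = (cos x sin y, cos x cos y, sin x sin θ, sin x cos θ) in the Berger sphere S³_B(κ,τ) is a minimal surface (H = 0) and its extrinsic (product of principal curvatures) curvature equals K_e = −4τ²(κ − 4τ²)² cos⁴x / (κ + 4τ² − (κ − 4τ²)cos 2x)². -/

import Mathlib

open Real
open scoped RealInnerProductSpace

noncomputable section

abbrev E4 := EuclideanSpace ℝ (Fin 4)

def e4 (a b c d : ℝ) : E4 := (WithLp.equiv 2 (Fin 4 → ℝ)).symm ![a, b, c, d]

/-- The frame field `E₁(z,w) = (-w̄, z̄)` on S³ (round-unit). -/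
def frameE1 (p : E4) : E4 := e4 (-(p 2)) (p 3) (p 0) (-(p 1))

/-- The frame field `E₂(z,w) = (-i w̄, i z̄)` on S³ (round-unit). -/
def frameE2 (p : E4) : E4 := e4 (-(p 3)) (-(p 2)) (p 1) (p 0)

/-- The Hopf vector field `V(z,w) = (iz, iw)` (round-unit). -/
def hopfV (p : E4) : E4 := e4 (-(p 1)) (p 0) (-(p 3)) (p 2)

/-- The Berger metric at `p ∈ S³`. -/
def bergerMet (κ τ : ℝ) (p X Y : E4) : ℝ :=
  (4 / κ) * (⟪X, Y⟫ + (4 * τ ^ 2 / κ - 1) * ⟪X, hopfV p⟫ * ⟪Y, hopfV p⟫)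

/-- The Levi-Civita covariant derivative of the Berger metric, of a tangent vector
field `W` along a curve `γ` in S³, expressed through the frame `{E₁, E₂, V}`
(round-orthonormal on S³) using the Berger connection table
`∇_{E₁}E₂ = -V`, `∇_{E₂}E₁ = V`, `∇_{E₁}V = (4τ²/κ)E₂`, `∇_{E₂}V = -(4τ²/κ)E₁`,
`∇_V E₁ = (4τ²/κ − 1)E₂`, `∇_V E₂ = -(4τ²/κ − 1)E₁`, all others zero. -/
def bergerCovDeriv (κ τ : ℝ) (γ W : ℝ → E4) (t : ℝ) : E4 :=
  let b := 4 * τ ^ 2 / κ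
  let p := γ t
  let a1 := ⟪deriv γ t, frameE1 p⟫
  let a2 := ⟪deriv γ t, frameE2 p⟫
  let a3 := ⟪deriv γ t, hopfV p⟫
  let c1 : ℝ → ℝ := fun s => ⟪W s, frameE1 (γ s)⟫
  let c2 : ℝ → ℝ := fun s => ⟪W s, frameE2 (γ s)⟫
  let c3 : ℝ → ℝ := fun s => ⟪W s, hopfV (γ s)⟫
  (deriv c1 t + (-(b * a2 * c3 t) - (b - 1) * a3 * c2 t)) • frameE1 p +
    (deriv c2 t + (b * a1 * c3 t + (b - 1) * a3 * c1 t)) • frameE2 p +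
    (deriv c3 t + (a2 * c1 t - a1 * c2 t)) • hopfV p

/-- The equator `ψ(x,y) = (cos x sin y, cos x cos y, sin x sin θ, sin x cos θ)`. -/
def ψeq (θ x y : ℝ) : E4 :=
  e4 (cos x * sin y) (cos x * cos y) (sin x * sin θ) (sin x * cos θ)

def ψeqx (θ x y : ℝ) : E4 := deriv (fun t => ψeq θ t y) x

def ψeqy (θ x y : ℝ) : E4 := deriv (fun t => ψeq θ x t) y

/-- The Berger-unit normal of the equator:
`N = -α(cos x sin(y+θ) E₁ + cos x cos(y+θ) E₂ − (κ/4τ²) sin x V)` with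
`α = √(2κτ²/(κ + 4τ² − (κ−4τ²)cos 2x))`. -/
def equatorNormal (κ τ θ x y : ℝ) : E4 :=
  let α := Real.sqrt (2 * κ * τ ^ 2 / (κ + 4 * τ ^ 2 - (κ - 4 * τ ^ 2) * cos (2 * x)))
  (-α) • ((cos x * sin (y + θ)) • frameE1 (ψeq θ x y) +
    (cos x * cos (y + θ)) • frameE2 (ψeq θ x y) +
    (-(κ / (4 * τ ^ 2)) * sin x) • hopfV (ψeq θ x y))

/-- First fundamental form coefficients of the equator. -/
def Ieq (κ τ θ x y : ℝ) : ℝ × ℝ × ℝ :=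
  (bergerMet κ τ (ψeq θ x y) (ψeqx θ x y) (ψeqx θ x y),
   bergerMet κ τ (ψeq θ x y) (ψeqx θ x y) (ψeqy θ x y),
   bergerMet κ τ (ψeq θ x y) (ψeqy θ x y) (ψeqy θ x y))

/-- Second fundamental form coefficients of the equator:
`e = ⟨∇_{ψx}ψx, N⟩`, `f = ⟨∇_{ψx}ψy, N⟩`, `g = ⟨∇_{ψy}ψy, N⟩` (Berger metric). -/
def IIeq (κ τ θ x y : ℝ) : ℝ × ℝ × ℝ :=
  (bergerMet κ τ (ψeq θ x y)
      (bergerCovDeriv κ τ (fun t => ψeq θ t y) (fun t => ψeqx θ t y) x)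
      (equatorNormal κ τ θ x y),
   bergerMet κ τ (ψeq θ x y)
      (bergerCovDeriv κ τ (fun t => ψeq θ t y) (fun t => ψeqy θ t y) x)
      (equatorNormal κ τ θ x y),
   bergerMet κ τ (ψeq θ x y)
      (bergerCovDeriv κ τ (fun t => ψeq θ x t) (fun t => ψeqy θ x t) y)
      (equatorNormal κ τ θ x y))

/-- Mean curvature of the equator, `H = (Eg − 2Ff + Ge)/(2(EG − F²))`. -/
def Heq (κ τ θ x y : ℝ) : ℝ :=
  let (E, F, G) := Ieq κ τ θ x y
  let (e, f, g) := IIeq κ τ θ x y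
  (E * g - 2 * F * f + G * e) / (2 * (E * G - F ^ 2))

/-- Extrinsic curvature (determinant of the shape operator) of the equator,
`K_e = (eg − f²)/(EG − F²)`. -/
def Keq (κ τ θ x y : ℝ) : ℝ :=
  let (E, F, G) := Ieq κ τ θ x y
  let (e, f, g) := IIeq κ τ θ x y
  (e * g - f ^ 2) / (E * G - F ^ 2)

@[simp] lemma e4_apply (a b c d : ℝ) (i : Fin 4) : e4 a b c d i = ![a,b,c,d] i := rfl
lemma inner_e4 (a b c d a' b' c' d' : ℝ) :
    ⟪e4 a b c d, e4 a' b' c' d'⟫ = a*a'+b*b'+c*c'+d*d' := by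
  simp [PiLp.inner_apply, Fin.sum_univ_four, RCLike.inner_apply]
  ring
lemma e4_smul (r a b c d : ℝ) : r • e4 a b c d = e4 (r*a) (r*b) (r*c) (r*d) := by
  ext i; fin_cases i <;> rfl
lemma e4_add (a b c d a' b' c' d' : ℝ) :
    e4 a b c d + e4 a' b' c' d' = e4 (a+a') (b+b') (c+c') (d+d') := by
  ext i; fin_cases i <;> rfl
lemma e4_eq_iff {a b c d a' b' c' d' : ℝ} :
    e4 a b c d = e4 a' b' c' d' ↔ a = a' ∧ b = b' ∧ c = c' ∧ d = d' := by
  constructor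
  · intro h
    exact ⟨congrArg (fun v : E4 => v 0) h, congrArg (fun v : E4 => v 1) h,
      congrArg (fun v : E4 => v 2) h, congrArg (fun v : E4 => v 3) h⟩
  · rintro ⟨rfl, rfl, rfl, rfl⟩; rfl
lemma zero_e4 : (0 : E4) = e4 0 0 0 0 := by
  ext i; fin_cases i <;> rfl
lemma hasDerivAt_e4 {f g h k : ℝ → ℝ} {f' g' h' k' : ℝ} {x : ℝ}
    (hf : HasDerivAt f f' x) (hg : HasDerivAt g g' x)
    (hh : HasDerivAt h h' x) (hk : HasDerivAt k k' x) :
    HasDerivAt (fun t => e4 (f t) (g t) (h t) (k t)) (e4 f' g' h' k') x := by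
  have hpi : HasDerivAt (fun t => (![f t, g t, h t, k t] : Fin 4 → ℝ)) ![f',g',h',k'] x := by
    rw [hasDerivAt_pi]
    intro i
    fin_cases i
    · simpa using hf
    · simpa using hg
    · simpa using hh
    · simpa using hk
  exact (PiLp.continuousLinearEquiv 2 ℝ (fun _ : Fin 4 => ℝ)).symm.toContinuousLinearMap.hasFDerivAt.comp_hasDerivAt x hpi
lemma psix (θ x y : ℝ) : ψeqx θ x y =
    e4 (-sin x * sin y) (-sin x * cos y) (cos x * sin θ) (cos x * cos θ) := by
  apply HasDerivAt.deriv
  exact hasDerivAt_e4 ((hasDerivAt_cos x).mul_const _) ((hasDerivAt_cos x).mul_const _)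
    ((hasDerivAt_sin x).mul_const _) ((hasDerivAt_sin x).mul_const _)
lemma psiy (θ x y : ℝ) : ψeqy θ x y =
    e4 (cos x * cos y) (cos x * -sin y) 0 0 := by
  apply HasDerivAt.deriv
  exact hasDerivAt_e4 ((hasDerivAt_sin y).const_mul _) ((hasDerivAt_cos y).const_mul _)
    (hasDerivAt_const y _) (hasDerivAt_const y _)
lemma frame1_psi (θ x y : ℝ) : frameE1 (ψeq θ x y) =
    e4 (-(sin x * sin θ)) (sin x * cos θ) (cos x * sin y) (-(cos x * cos y)) := by
  simp [frameE1, ψeq]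
lemma frame2_psi (θ x y : ℝ) : frameE2 (ψeq θ x y) =
    e4 (-(sin x * cos θ)) (-(sin x * sin θ)) (cos x * cos y) (cos x * sin y) := by
  simp [frameE2, ψeq]
lemma hopf_psi (θ x y : ℝ) : hopfV (ψeq θ x y) =
    e4 (-(cos x * cos y)) (cos x * sin y) (-(sin x * cos θ)) (sin x * sin θ) := by
  simp [hopfV, ψeq]

lemma cov_xx (κ τ θ x y : ℝ) :
    bergerCovDeriv κ τ (fun t => ψeq θ t y) (fun t => ψeqx θ t y) x = 0 := by
  have hc1 : (fun s => ⟪ψeqx θ s y, frameE1 (ψeq θ s y)⟫) =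
      (fun _ : ℝ => sin y * sin θ - cos y * cos θ) := by
    funext s
    rw [psix, frame1_psi, inner_e4]
    linear_combination (sin y * sin θ - cos y * cos θ) * (sin_sq_add_cos_sq s)
  have hc2 : (fun s => ⟪ψeqx θ s y, frameE2 (ψeq θ s y)⟫) =
      (fun _ : ℝ => sin y * cos θ + cos y * sin θ) := by
    funext s
    rw [psix, frame2_psi, inner_e4]
    linear_combination (sin y * cos θ + cos y * sin θ) * (sin_sq_add_cos_sq s)
  have hc3 : (fun s => ⟪ψeqx θ s y, hopfV (ψeq θ s y)⟫) = (fun _ : ℝ => (0:ℝ)) := by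
    funext s
    rw [psix, hopf_psi, inner_e4]
    ring
  have hdx : deriv (fun t => ψeq θ t y) x =
      e4 (-sin x * sin y) (-sin x * cos y) (cos x * sin θ) (cos x * cos θ) := psix θ x y
  simp only [bergerCovDeriv]
  rw [hc1, hc2, hc3]
  simp only [deriv_const', hdx, psix, frame1_psi, frame2_psi, hopf_psi, inner_e4,
    e4_smul, e4_add]
  rw [zero_e4, e4_eq_iff]
  refine ⟨by ring, by ring, by ring, by ring⟩

lemma metE (κ τ θ x y : ℝ) :
    bergerMet κ τ (ψeq θ x y) (ψeqx θ x y) (ψeqx θ x y) = 4/κ := by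
  have px := sin_sq_add_cos_sq x
  have py := sin_sq_add_cos_sq y
  have pθ := sin_sq_add_cos_sq θ
  simp only [bergerMet, psix, hopf_psi, inner_e4]
  linear_combination ((4) * cos y ^ 2 * (1/κ) + (4) * sin y ^ 2 * (1/κ)) * px + ((4) * (1/κ) + (-4) * cos x ^ 2 * (1/κ)) * py + ((4) * cos x ^ 2 * (1/κ)) * pθ

lemma metF (κ τ θ x y : ℝ) :
    bergerMet κ τ (ψeq θ x y) (ψeqx θ x y) (ψeqy θ x y) = 0 := by
  simp only [bergerMet, psix, psiy, hopf_psi, inner_e4]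
  ring

lemma metG (κ τ θ x y : ℝ) :
    bergerMet κ τ (ψeq θ x y) (ψeqy θ x y) (ψeqy θ x y) =
      4/κ * (cos x^2 * (sin x^2 + 4*τ^2/κ * cos x^2)) := by
  have px := sin_sq_add_cos_sq x
  have py := sin_sq_add_cos_sq y
  simp only [bergerMet, psiy, hopf_psi, inner_e4]
  linear_combination ((-4) * cos x ^ 2 * (1/κ)) * px + ((4) * cos x ^ 2 * (1/κ) + (-4) * cos x ^ 4 * (1/κ) + (16) * cos x ^ 4 * τ ^ 2 * (1/κ) ^ 2 + (-4) * cos x ^ 4 * cos y ^ 2 * (1/κ) + (16) * cos x ^ 4 * cos y ^ 2 * τ ^ 2 * (1/κ) ^ 2 + (-4) * cos x ^ 4 * sin y ^ 2 * (1/κ) + (16) * cos x ^ 4 * sin y ^ 2 * τ ^ 2 * (1/κ) ^ 2) * py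

lemma cov_xy (κ τ θ x y : ℝ) :
    bergerCovDeriv κ τ (fun t => ψeq θ t y) (fun t => ψeqy θ t y) x =
      ((cos y * sin θ + sin y * cos θ) * (4*τ^2/κ * cos x^2 - cos x^2 + sin x^2)) •
        frameE1 (ψeq θ x y) +
      ((cos y * cos θ - sin y * sin θ) * (4*τ^2/κ * cos x^2 - cos x^2 + sin x^2)) •
        frameE2 (ψeq θ x y) +
      (sin x * cos x) • hopfV (ψeq θ x y) := by
  have px := sin_sq_add_cos_sq x
  have py := sin_sq_add_cos_sq y
  have pθ := sin_sq_add_cos_sq θ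
  have hc1 : (fun s => ⟪ψeqy θ s y, frameE1 (ψeq θ s y)⟫) =
      (fun s => -(sin s * cos s * (cos y * sin θ + sin y * cos θ))) := by
    funext s; rw [psiy, frame1_psi, inner_e4]; ring
  have hc2 : (fun s => ⟪ψeqy θ s y, frameE2 (ψeq θ s y)⟫) =
      (fun s => -(sin s * cos s * (cos y * cos θ - sin y * sin θ))) := by
    funext s; rw [psiy, frame2_psi, inner_e4]; ring
  have hc3 : (fun s => ⟪ψeqy θ s y, hopfV (ψeq θ s y)⟫) =
      (fun s => -(cos s * cos s * (cos y * cos y + sin y * sin y))) := by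
    funext s; rw [psiy, hopf_psi, inner_e4]; ring
  have hd1 : deriv (fun s => -(sin s * cos s * (cos y * sin θ + sin y * cos θ))) x =
      -((cos x * cos x + sin x * -sin x) * (cos y * sin θ + sin y * cos θ)) :=
    ((((hasDerivAt_sin x).mul (hasDerivAt_cos x)).mul_const _).neg).deriv
  have hd2 : deriv (fun s => -(sin s * cos s * (cos y * cos θ - sin y * sin θ))) x =
      -((cos x * cos x + sin x * -sin x) * (cos y * cos θ - sin y * sin θ)) :=
    ((((hasDerivAt_sin x).mul (hasDerivAt_cos x)).mul_const _).neg).deriv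
  have hd3 : deriv (fun s => -(cos s * cos s * (cos y * cos y + sin y * sin y))) x =
      -((-sin x * cos x + cos x * -sin x) * (cos y * cos y + sin y * sin y)) :=
    ((((hasDerivAt_cos x).mul (hasDerivAt_cos x)).mul_const _).neg).deriv
  have hdx : deriv (fun t => ψeq θ t y) x =
      e4 (-sin x * sin y) (-sin x * cos y) (cos x * sin θ) (cos x * cos θ) := psix θ x y
  simp only [bergerCovDeriv]
  rw [hc1, hc2, hc3, hd1, hd2, hd3]
  simp only [hdx, psix, psiy, frame1_psi, frame2_psi, hopf_psi, inner_e4, e4_smul, e4_add]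
  rw [e4_eq_iff]
  refine ⟨?_, ?_, ?_, ?_⟩
  · linear_combination (sin x * cos x ^ 2 * cos y ^ 3 * cos θ ^ 2 + (-4) * sin x * cos x ^ 2 * cos y ^ 3 * cos θ ^ 2 * τ ^ 2 * (1/κ) + sin x * cos x ^ 2 * cos y ^ 3 * sin θ ^ 2 + (-4) * sin x * cos x ^ 2 * cos y ^ 3 * sin θ ^ 2 * τ ^ 2 * (1/κ) + sin x * cos x ^ 2 * sin y ^ 2 * cos y * cos θ ^ 2 + (-4) * sin x * cos x ^ 2 * sin y ^ 2 * cos y * cos θ ^ 2 * τ ^ 2 * (1/κ) + sin x * cos x ^ 2 * sin y ^ 2 * cos y * sin θ ^ 2 + (-4) * sin x * cos x ^ 2 * sin y ^ 2 * cos y * sin θ ^ 2 * τ ^ 2 * (1/κ)) * px + ((-2) * sin x * cos x ^ 2 * cos y + sin x * cos x ^ 2 * cos y * cos θ ^ 2 + (-4) * sin x * cos x ^ 2 * cos y * cos θ ^ 2 * τ ^ 2 * (1/κ) + sin x * cos x ^ 2 * cos y * sin θ ^ 2 + (-4) * sin x * cos x ^ 2 * cos y * sin θ ^ 2 * τ ^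 2 * (1/κ)) * py + (sin x * cos x ^ 2 * cos y) * pθ
  · linear_combination ((-1) * sin x * cos x ^ 2 * sin y * cos y ^ 2 * cos θ ^ 2 + (4) * sin x * cos x ^ 2 * sin y * cos y ^ 2 * cos θ ^ 2 * τ ^ 2 * (1/κ) + (-1) * sin x * cos x ^ 2 * sin y * cos y ^ 2 * sin θ ^ 2 + (4) * sin x * cos x ^ 2 * sin y * cos y ^ 2 * sin θ ^ 2 * τ ^ 2 * (1/κ) + (-1) * sin x * cos x ^ 2 * sin y ^ 3 * cos θ ^ 2 + (4) * sin x * cos x ^ 2 * sin y ^ 3 * cos θ ^ 2 * τ ^ 2 * (1/κ) + (-1) * sin x * cos x ^ 2 * sin y ^ 3 * sin θ ^ 2 + (4) * sin x * cos x ^ 2 * sin y ^ 3 * sin θ ^ 2 * τ ^ 2 * (1/κ)) * px + ((2) * sin x * cos x ^ 2 * sin y + (-1) * sin x * cos x ^ 2 * sin y * cos θ ^ 2 + (4) * sin x * cos x ^ 2 * sin y * cos θ ^ 2 * τ ^ 2 * (1/κ) + (-1) * sin x * cos x ^ 2 * sin y * sin θ ^ 2 + (4) * sin x * cos x ^ 2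 * sin y * sin θ ^ 2 * τ ^ 2 * (1/κ)) * py + ((-1) * sin x * cos x ^ 2 * sin y) * pθ
  · linear_combination ((2) * cos x * cos θ + (-2) * cos x * cos y ^ 2 * cos θ + (-2) * cos x * sin y ^ 2 * cos θ + (-1) * cos x ^ 3 * cos θ + cos x ^ 3 * cos y ^ 2 * cos θ ^ 3 + cos x ^ 3 * cos y ^ 2 * sin θ ^ 2 * cos θ + (4) * cos x ^ 3 * cos y ^ 4 * cos θ * τ ^ 2 * (1/κ) + cos x ^ 3 * sin y ^ 2 * cos θ ^ 3 + cos x ^ 3 * sin y ^ 2 * sin θ ^ 2 * cos θ + (8) * cos x ^ 3 * sin y ^ 2 * cos y ^ 2 * cos θ * τ ^ 2 * (1/κ) + (4) * cos x ^ 3 * sin y ^ 4 * cos θ * τ ^ 2 * (1/κ) + sin x ^ 2 * cos x * cos y ^ 2 * cos θ ^ 3 + sin x ^ 2 * cos x * cos y ^ 2 * sin θ ^ 2 * cos θ + sin x ^ 2 * cos x * sin y ^ 2 * cos θ ^ 3 + sin x ^ 2 * cos x * sin y ^ 2 * sin θ ^ 2 * cos θ) * px + ((-2) * cos x * cos θ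 + (2) * cos x ^ 3 * cos θ + cos x ^ 3 * cos θ ^ 3 + cos x ^ 3 * sin θ ^ 2 * cos θ + (4) * cos x ^ 3 * cos y ^ 2 * cos θ * τ ^ 2 * (1/κ) + (4) * cos x ^ 3 * sin y ^ 2 * cos θ * τ ^ 2 * (1/κ) + (-1) * cos x ^ 5 * cos θ ^ 3 + (-1) * cos x ^ 5 * sin θ ^ 2 * cos θ + sin x ^ 2 * cos x * cos θ ^ 3 + sin x ^ 2 * cos x * sin θ ^ 2 * cos θ + (-1) * sin x ^ 2 * cos x ^ 3 * cos θ ^ 3 + (-1) * sin x ^ 2 * cos x ^ 3 * sin θ ^ 2 * cos θ) * py + (cos x ^ 3 * cos θ + (-1) * cos x ^ 5 * cos θ + sin x ^ 2 * cos x * cos θ + (-1) * sin x ^ 2 * cos x ^ 3 * cos θ) * pθ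
  · linear_combination ((-2) * cos x * sin θ + (2) * cos x * cos y ^ 2 * sin θ + (2) * cos x * sin y ^ 2 * sin θ + cos x ^ 3 * sin θ + (-1) * cos x ^ 3 * cos y ^ 2 * sin θ * cos θ ^ 2 + (-1) * cos x ^ 3 * cos y ^ 2 * sin θ ^ 3 + (-4) * cos x ^ 3 * cos y ^ 4 * sin θ * τ ^ 2 * (1/κ) + (-1) * cos x ^ 3 * sin y ^ 2 * sin θ * cos θ ^ 2 + (-1) * cos x ^ 3 * sin y ^ 2 * sin θ ^ 3 + (-8) * cos x ^ 3 * sin y ^ 2 * cos y ^ 2 * sin θ * τ ^ 2 * (1/κ) + (-4) * cos x ^ 3 * sin y ^ 4 * sin θ * τ ^ 2 * (1/κ) + (-1) * sin x ^ 2 * cos x * cos y ^ 2 * sin θ * cos θ ^ 2 + (-1) * sin x ^ 2 * cos x * cos y ^ 2 * sin θ ^ 3 + (-1) * sin x ^ 2 * cos x * sin y ^ 2 * sin θ * cos θ ^ 2 + (-1) * sin x ^ 2 * cos x * sin y ^ 2 * sin θ ^ 3) * px + ((2) * cos x * sin θ + (-2) * cos x ^ 3 * sin θ + (-1) * cos x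 ^ 3 * sin θ * cos θ ^ 2 + (-1) * cos x ^ 3 * sin θ ^ 3 + (-4) * cos x ^ 3 * cos y ^ 2 * sin θ * τ ^ 2 * (1/κ) + (-4) * cos x ^ 3 * sin y ^ 2 * sin θ * τ ^ 2 * (1/κ) + cos x ^ 5 * sin θ * cos θ ^ 2 + cos x ^ 5 * sin θ ^ 3 + (-1) * sin x ^ 2 * cos x * sin θ * cos θ ^ 2 + (-1) * sin x ^ 2 * cos x * sin θ ^ 3 + sin x ^ 2 * cos x ^ 3 * sin θ * cos θ ^ 2 + sin x ^ 2 * cos x ^ 3 * sin θ ^ 3) * py + ((-1) * cos x ^ 3 * sin θ + cos x ^ 5 * sin θ + (-1) * sin x ^ 2 * cos x * sin θ + sin x ^ 2 * cos x ^ 3 * sin θ) * pθ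

lemma cov_yy (κ τ θ x y : ℝ) :
    bergerCovDeriv κ τ (fun t => ψeq θ x t) (fun t => ψeqy θ x t) y =
      (-(sin x * cos x) * (cos y * cos θ - sin y * sin θ) *
          (1 + (2*(4*τ^2/κ) - 1) * cos x^2)) • frameE1 (ψeq θ x y) +
      ((sin x * cos x) * (cos y * sin θ + sin y * cos θ) *
          (1 + (2*(4*τ^2/κ) - 1) * cos x^2)) • frameE2 (ψeq θ x y) +
      (0:ℝ) • hopfV (ψeq θ x y) := by
  have px := sin_sq_add_cos_sq x
  have py := sin_sq_add_cos_sq y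
  have pθ := sin_sq_add_cos_sq θ
  have hc1 : (fun t => ⟪ψeqy θ x t, frameE1 (ψeq θ x t)⟫) =
      (fun t => -(sin x * cos x * (cos t * sin θ + sin t * cos θ))) := by
    funext t; rw [psiy, frame1_psi, inner_e4]; ring
  have hc2 : (fun t => ⟪ψeqy θ x t, frameE2 (ψeq θ x t)⟫) =
      (fun t => -(sin x * cos x * (cos t * cos θ - sin t * sin θ))) := by
    funext t; rw [psiy, frame2_psi, inner_e4]; ring
  have hc3 : (fun t => ⟪ψeqy θ x t, hopfV (ψeq θ x t)⟫) =
      (fun t => -(cos x * cos x * (cos t * cos t + sin t * sin t))) := by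
    funext t; rw [psiy, hopf_psi, inner_e4]; ring
  have hd1 : deriv (fun t => -(sin x * cos x * (cos t * sin θ + sin t * cos θ))) y =
      -(sin x * cos x * (-sin y * sin θ + cos y * cos θ)) :=
    (((((hasDerivAt_cos y).mul_const (sin θ)).add
      ((hasDerivAt_sin y).mul_const (cos θ))).const_mul (sin x * cos x)).neg).deriv
  have hd2 : deriv (fun t => -(sin x * cos x * (cos t * cos θ - sin t * sin θ))) y =
      -(sin x * cos x * (-sin y * cos θ - cos y * sin θ)) :=
    (((((hasDerivAt_cos y).mul_const (cos θ)).sub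
      ((hasDerivAt_sin y).mul_const (sin θ))).const_mul (sin x * cos x)).neg).deriv
  have hd3 : deriv (fun t => -(cos x * cos x * (cos t * cos t + sin t * sin t))) y =
      -(cos x * cos x * (-sin y * cos y + cos y * -sin y + (cos y * sin y + sin y * cos y))) :=
    (((((hasDerivAt_cos y).mul (hasDerivAt_cos y)).add
      ((hasDerivAt_sin y).mul (hasDerivAt_sin y))).const_mul (cos x * cos x)).neg).deriv
  have hdy : deriv (fun t => ψeq θ x t) y = e4 (cos x * cos y) (cos x * -sin y) 0 0 := psiy θ x y
  simp only [bergerCovDeriv]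
  rw [hc1, hc2, hc3, hd1, hd2, hd3]
  simp only [hdy, psix, psiy, frame1_psi, frame2_psi, hopf_psi, inner_e4, e4_smul, e4_add]
  rw [e4_eq_iff]
  refine ⟨?_, ?_, ?_, ?_⟩
  · linear_combination ((-1) * cos x ^ 3 * sin y * cos θ ^ 2 + (8) * cos x ^ 3 * sin y * cos θ ^ 2 * τ ^ 2 * (1/κ) + (-1) * cos x ^ 3 * sin y * sin θ ^ 2 + (8) * cos x ^ 3 * sin y * sin θ ^ 2 * τ ^ 2 * (1/κ) + cos x ^ 3 * sin y * cos y ^ 2 * cos θ ^ 2 + (-8) * cos x ^ 3 * sin y * cos y ^ 2 * cos θ ^ 2 * τ ^ 2 * (1/κ) + cos x ^ 3 * sin y * cos y ^ 2 * sin θ ^ 2 + (-8) * cos x ^ 3 * sin y * cos y ^ 2 * sin θ ^ 2 * τ ^ 2 * (1/κ) + cos x ^ 3 * sin y ^ 3 * cos θ ^ 2 + (-8) * cos x ^ 3 * sin y ^ 3 * cos θ ^ 2 * τ ^ 2 * (1/κ) + cos x ^ 3 * sin y ^ 3 * sin θ ^ 2 + (-8) * cos x ^ 3 * sin y ^ 3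 * sin θ ^ 2 * τ ^ 2 * (1/κ)) * px + (cos x ^ 3 * sin y * cos θ ^ 2 + (-8) * cos x ^ 3 * sin y * cos θ ^ 2 * τ ^ 2 * (1/κ) + cos x ^ 3 * sin y * sin θ ^ 2 + (-8) * cos x ^ 3 * sin y * sin θ ^ 2 * τ ^ 2 * (1/κ) + (-1) * cos x ^ 5 * sin y * cos θ ^ 2 + (8) * cos x ^ 5 * sin y * cos θ ^ 2 * τ ^ 2 * (1/κ) + (-1) * cos x ^ 5 * sin y * sin θ ^ 2 + (8) * cos x ^ 5 * sin y * sin θ ^ 2 * τ ^ 2 * (1/κ)) * py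
  · linear_combination ((-1) * cos x ^ 3 * cos y * cos θ ^ 2 + (8) * cos x ^ 3 * cos y * cos θ ^ 2 * τ ^ 2 * (1/κ) + (-1) * cos x ^ 3 * cos y * sin θ ^ 2 + (8) * cos x ^ 3 * cos y * sin θ ^ 2 * τ ^ 2 * (1/κ) + cos x ^ 3 * cos y ^ 3 * cos θ ^ 2 + (-8) * cos x ^ 3 * cos y ^ 3 * cos θ ^ 2 * τ ^ 2 * (1/κ) + cos x ^ 3 * cos y ^ 3 * sin θ ^ 2 + (-8) * cos x ^ 3 * cos y ^ 3 * sin θ ^ 2 * τ ^ 2 * (1/κ) + cos x ^ 3 * sin y ^ 2 * cos y * cos θ ^ 2 + (-8) * cos x ^ 3 * sin y ^ 2 * cos y * cos θ ^ 2 * τ ^ 2 * (1/κ) + cos x ^ 3 * sin y ^ 2 * cos y * sin θ ^ 2 + (-8) * cos x ^ 3 * sin y ^ 2 * cos y * sin θ ^ 2 * τ ^ 2 * (1/κ)) * px + (cos x ^ 3 * cos y * cos θ ^ 2 + (-8) * cos x ^ 3 * cos y * cos θ ^ 2 * τ ^ 2 * (1/κ) + cos x ^ 3 * cos y * sin θ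 ^ 2 + (-8) * cos x ^ 3 * cos y * sin θ ^ 2 * τ ^ 2 * (1/κ) + (-1) * cos x ^ 5 * cos y * cos θ ^ 2 + (8) * cos x ^ 5 * cos y * cos θ ^ 2 * τ ^ 2 * (1/κ) + (-1) * cos x ^ 5 * cos y * sin θ ^ 2 + (8) * cos x ^ 5 * cos y * sin θ ^ 2 * τ ^ 2 * (1/κ)) * py
  · linear_combination ((-1) * sin x * cos x ^ 4 * cos y ^ 2 * sin θ + (8) * sin x * cos x ^ 4 * cos y ^ 2 * sin θ * τ ^ 2 * (1/κ) + (-1) * sin x * cos x ^ 4 * sin y ^ 2 * sin θ + (8) * sin x * cos x ^ 4 * sin y ^ 2 * sin θ * τ ^ 2 * (1/κ)) * py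
  · linear_combination ((-1) * sin x * cos x ^ 4 * cos y ^ 2 * cos θ + (8) * sin x * cos x ^ 4 * cos y ^ 2 * cos θ * τ ^ 2 * (1/κ) + (-1) * sin x * cos x ^ 4 * sin y ^ 2 * cos θ + (8) * sin x * cos x ^ 4 * sin y ^ 2 * cos θ * τ ^ 2 * (1/κ)) * py

lemma metII_e (κ τ θ x y : ℝ) :
    bergerMet κ τ (ψeq θ x y)
      (bergerCovDeriv κ τ (fun t => ψeq θ t y) (fun t => ψeqx θ t y) x)
      (equatorNormal κ τ θ x y) = 0 := by
  rw [cov_xx]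
  simp [bergerMet]

lemma metII_f (κ τ θ x y α : ℝ) (hκ : κ ≠ 0) (hτ : τ ≠ 0)
    (hα : Real.sqrt (2 * κ * τ ^ 2 / (κ + 4 * τ ^ 2 - (κ - 4 * τ ^ 2) * cos (2 * x))) = α) :
    bergerMet κ τ (ψeq θ x y)
      (bergerCovDeriv κ τ (fun t => ψeq θ t y) (fun t => ψeqy θ t y) x)
      (equatorNormal κ τ θ x y) = -(4/κ * α * (4*τ^2/κ - 1) * cos x^3) := by
  have px := sin_sq_add_cos_sq x
  have py := sin_sq_add_cos_sq y
  have pθ := sin_sq_add_cos_sq θ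
  have hK : κ * (1/κ) = 1 := by field_simp
  have hT : τ^2 * (1/τ^2) = 1 := by field_simp
  rw [cov_xy]
  simp only [bergerMet, equatorNormal]
  rw [hα, sin_add, cos_add]
  simp only [frame1_psi, frame2_psi, hopf_psi, e4_smul, e4_add, inner_e4]
  linear_combination ((4) * cos x * α * (1/κ) + (-8) * cos x * cos θ ^ 2 * α * (1/κ) + (4) * cos x * cos θ ^ 4 * α * (1/κ) + (-4) * cos x * sin θ ^ 2 * α * (1/κ) + (4) * cos x * sin θ ^ 2 * cos θ ^ 2 * α * (1/κ) + (-1) * cos x ^ 3 * α * (1/τ^2) + (8) * cos x ^ 3 * cos θ ^ 2 * α * (1/κ) + (-4) * cos x ^ 3 * cos θ ^ 4 * α * (1/κ) + (4) * cos x ^ 3 * sin θ ^ 2 * α * (1/κ) + (-4) * cos x ^ 3 * sin θ ^ 2 * cos θ ^ 2 * α * (1/κ) + cos x ^ 3 * cos y ^ 2 * α * (1/τ^2) + (4) * cos x ^ 3 * cos y ^ 2 * cos θ ^ 4 * α * (1/κ) + (-16) * cos x ^ 3 * cos y ^ 2 * cos θ ^ 4 * τ ^ 2 * α * (1/κ)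 ^ 2 + (8) * cos x ^ 3 * cos y ^ 2 * sin θ ^ 2 * cos θ ^ 2 * α * (1/κ) + (-32) * cos x ^ 3 * cos y ^ 2 * sin θ ^ 2 * cos θ ^ 2 * τ ^ 2 * α * (1/κ) ^ 2 + (4) * cos x ^ 3 * cos y ^ 2 * sin θ ^ 4 * α * (1/κ) + (-16) * cos x ^ 3 * cos y ^ 2 * sin θ ^ 4 * τ ^ 2 * α * (1/κ) ^ 2 + (-4) * cos x ^ 3 * cos y ^ 4 * cos θ ^ 2 * α * (1/κ) + (-4) * cos x ^ 3 * cos y ^ 4 * sin θ ^ 2 * α * (1/κ) + cos x ^ 3 * sin y ^ 2 * α * (1/τ^2) + (4) * cos x ^ 3 * sin y ^ 2 * cos θ ^ 4 * α * (1/κ) + (-16) * cos x ^ 3 * sin y ^ 2 * cos θ ^ 4 * τ ^ 2 * α * (1/κ) ^ 2 + (8) * cos x ^ 3 * sin y ^ 2 * sin θ ^ 2 * cos θ ^ 2 * α * (1/κ) + (-32) * cos x ^ 3 * sin y ^ 2 * sin θ ^ 2 * cos θ ^ 2 * τ ^ 2 * α * (1/κ) ^ 2 + (4) * cos x ^ 3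 * sin y ^ 2 * sin θ ^ 4 * α * (1/κ) + (-16) * cos x ^ 3 * sin y ^ 2 * sin θ ^ 4 * τ ^ 2 * α * (1/κ) ^ 2 + (-8) * cos x ^ 3 * sin y ^ 2 * cos y ^ 2 * cos θ ^ 2 * α * (1/κ) + (-8) * cos x ^ 3 * sin y ^ 2 * cos y ^ 2 * sin θ ^ 2 * α * (1/κ) + (-4) * cos x ^ 3 * sin y ^ 4 * cos θ ^ 2 * α * (1/κ) + (-4) * cos x ^ 3 * sin y ^ 4 * sin θ ^ 2 * α * (1/κ) + cos x ^ 5 * α * (1/τ^2) + (-4) * cos x ^ 5 * α * (1/κ) + (-1) * cos x ^ 5 * cos y ^ 4 * α * (1/τ^2) + (4) * cos x ^ 5 * cos y ^ 4 * α * (1/κ) + (-2) * cos x ^ 5 * sin y ^ 2 * cos y ^ 2 * α * (1/τ^2) + (8) * cos x ^ 5 * sin y ^ 2 * cos y ^ 2 * α * (1/κ) + (-1) * cos x ^ 5 * sin y ^ 4 * α * (1/τ^2) + (4) * cos x ^ 5 * sin y ^ 4 * α * (1/κ) + (-1) * sin x ^ 2 * cos x * cos θ ^ 2 * α * (1/τ^2)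 + (8) * sin x ^ 2 * cos x * cos θ ^ 2 * α * (1/κ) + sin x ^ 2 * cos x * cos θ ^ 4 * α * (1/τ^2) + (-4) * sin x ^ 2 * cos x * cos θ ^ 4 * α * (1/κ) + (4) * sin x ^ 2 * cos x * sin θ ^ 2 * α * (1/κ) + sin x ^ 2 * cos x * sin θ ^ 2 * cos θ ^ 2 * α * (1/τ^2) + (-4) * sin x ^ 2 * cos x * sin θ ^ 2 * cos θ ^ 2 * α * (1/κ) + (-4) * sin x ^ 2 * cos x * cos y ^ 2 * cos θ ^ 4 * α * (1/κ) + (-8) * sin x ^ 2 * cos x * cos y ^ 2 * sin θ ^ 2 * cos θ ^ 2 * α * (1/κ) + (-4) * sin x ^ 2 * cos x * cos y ^ 2 * sin θ ^ 4 * α * (1/κ) + (-4) * sin x ^ 2 * cos x * sin y ^ 2 * cos θ ^ 4 * α * (1/κ) + (-8) * sin x ^ 2 * cos x * sin y ^ 2 * sin θ ^ 2 * cos θ ^ 2 * α * (1/κ) + (-4) * sin x ^ 2 * cos x * sin y ^ 2 * sin θ ^ 4 * α * (1/κ) + (2) * sin x ^ 2 * cos x ^ 3 * cos θ ^ 2 *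 α * (1/τ^2) + (-8) * sin x ^ 2 * cos x ^ 3 * cos θ ^ 2 * α * (1/κ) + (-1) * sin x ^ 2 * cos x ^ 3 * cos θ ^ 4 * α * (1/τ^2) + (4) * sin x ^ 2 * cos x ^ 3 * cos θ ^ 4 * α * (1/κ) + sin x ^ 2 * cos x ^ 3 * sin θ ^ 2 * α * (1/τ^2) + (-4) * sin x ^ 2 * cos x ^ 3 * sin θ ^ 2 * α * (1/κ) + (-1) * sin x ^ 2 * cos x ^ 3 * sin θ ^ 2 * cos θ ^ 2 * α * (1/τ^2) + (4) * sin x ^ 2 * cos x ^ 3 * sin θ ^ 2 * cos θ ^ 2 * α * (1/κ) + (-2) * sin x ^ 2 * cos x ^ 3 * cos y ^ 2 * cos θ ^ 2 * α * (1/τ^2) + (8) * sin x ^ 2 * cos x ^ 3 * cos y ^ 2 * cos θ ^ 2 * α * (1/κ) + (-2) * sin x ^ 2 * cos x ^ 3 * cos y ^ 2 * sin θ ^ 2 * α * (1/τ^2) + (8) * sin x ^ 2 * cos x ^ 3 * cos y ^ 2 * sin θ ^ 2 * α * (1/κ) + (-2) * sin x ^ 2 * cos x ^ 3 * sin y ^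 2 * cos θ ^ 2 * α * (1/τ^2) + (8) * sin x ^ 2 * cos x ^ 3 * sin y ^ 2 * cos θ ^ 2 * α * (1/κ) + (-2) * sin x ^ 2 * cos x ^ 3 * sin y ^ 2 * sin θ ^ 2 * α * (1/τ^2) + (8) * sin x ^ 2 * cos x ^ 3 * sin y ^ 2 * sin θ ^ 2 * α * (1/κ) + (-1) * sin x ^ 4 * cos x * cos θ ^ 4 * α * (1/τ^2) + (4) * sin x ^ 4 * cos x * cos θ ^ 4 * α * (1/κ) + (-2) * sin x ^ 4 * cos x * sin θ ^ 2 * cos θ ^ 2 * α * (1/τ^2) + (8) * sin x ^ 4 * cos x * sin θ ^ 2 * cos θ ^ 2 * α * (1/κ) + (-1) * sin x ^ 4 * cos x * sin θ ^ 4 * α * (1/τ^2) + (4) * sin x ^ 4 * cos x * sin θ ^ 4 * α * (1/κ)) * px + (cos x ^ 3 * α * (1/τ^2) + (-4) * cos x ^ 3 * α * (1/κ) + (4) * cos x ^ 3 * cos θ ^ 4 * α * (1/κ) + (-16) * cos x ^ 3 * cos θ ^ 4 * τ ^ 2 * α * (1/κ) ^ 2 + (8) * cos x ^ 3 * sin θ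 ^ 2 * cos θ ^ 2 * α * (1/κ) + (-32) * cos x ^ 3 * sin θ ^ 2 * cos θ ^ 2 * τ ^ 2 * α * (1/κ) ^ 2 + (4) * cos x ^ 3 * sin θ ^ 4 * α * (1/κ) + (-16) * cos x ^ 3 * sin θ ^ 4 * τ ^ 2 * α * (1/κ) ^ 2 + (4) * cos x ^ 3 * cos y ^ 2 * α * (1/κ) + (-8) * cos x ^ 3 * cos y ^ 2 * cos θ ^ 2 * α * (1/κ) + (-8) * cos x ^ 3 * cos y ^ 2 * sin θ ^ 2 * α * (1/κ) + (-4) * cos x ^ 3 * sin y ^ 2 * cos θ ^ 2 * α * (1/κ) + (-4) * cos x ^ 3 * sin y ^ 2 * sin θ ^ 2 * α * (1/κ) + (-2) * cos x ^ 5 * α * (1/τ^2) + (12) * cos x ^ 5 * α * (1/κ) + (-16) * cos x ^ 5 * τ ^ 2 * α * (1/κ) ^ 2 + (-4) * cos x ^ 5 * cos θ ^ 4 * α * (1/κ) + (16) * cos x ^ 5 * cos θ ^ 4 * τ ^ 2 * α * (1/κ) ^ 2 + (-8) * cos x ^ 5 * sin θ ^ 2 * cos θ ^ 2 * α * (1/κ)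 + (32) * cos x ^ 5 * sin θ ^ 2 * cos θ ^ 2 * τ ^ 2 * α * (1/κ) ^ 2 + (-4) * cos x ^ 5 * sin θ ^ 4 * α * (1/κ) + (16) * cos x ^ 5 * sin θ ^ 4 * τ ^ 2 * α * (1/κ) ^ 2 + (-1) * cos x ^ 5 * cos y ^ 2 * α * (1/τ^2) + (-4) * cos x ^ 5 * cos y ^ 2 * α * (1/κ) + (16) * cos x ^ 5 * cos y ^ 2 * τ ^ 2 * α * (1/κ) ^ 2 + (16) * cos x ^ 5 * cos y ^ 2 * cos θ ^ 2 * α * (1/κ) + (-32) * cos x ^ 5 * cos y ^ 2 * cos θ ^ 2 * τ ^ 2 * α * (1/κ) ^ 2 + (16) * cos x ^ 5 * cos y ^ 2 * sin θ ^ 2 * α * (1/κ) + (-32) * cos x ^ 5 * cos y ^ 2 * sin θ ^ 2 * τ ^ 2 * α * (1/κ) ^ 2 + (-1) * cos x ^ 5 * sin y ^ 2 * α * (1/τ^2) + (4) * cos x ^ 5 * sin y ^ 2 * α * (1/κ) + (8) * cos x ^ 5 * sin y ^ 2 * cos θ ^ 2 * α * (1/κ) + (-16) * cos x ^ 5 *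 sin y ^ 2 * cos θ ^ 2 * τ ^ 2 * α * (1/κ) ^ 2 + (8) * cos x ^ 5 * sin y ^ 2 * sin θ ^ 2 * α * (1/κ) + (-16) * cos x ^ 5 * sin y ^ 2 * sin θ ^ 2 * τ ^ 2 * α * (1/κ) ^ 2 + cos x ^ 7 * α * (1/τ^2) + (-4) * cos x ^ 7 * α * (1/κ) + cos x ^ 7 * cos y ^ 2 * α * (1/τ^2) + (-4) * cos x ^ 7 * cos y ^ 2 * α * (1/κ) + cos x ^ 7 * sin y ^ 2 * α * (1/τ^2) + (-4) * cos x ^ 7 * sin y ^ 2 * α * (1/κ) + (-4) * sin x ^ 2 * cos x * cos θ ^ 4 * α * (1/κ) + (-8) * sin x ^ 2 * cos x * sin θ ^ 2 * cos θ ^ 2 * α * (1/κ) + (-4) * sin x ^ 2 * cos x * sin θ ^ 4 * α * (1/κ) + (-2) * sin x ^ 2 * cos x ^ 3 * cos θ ^ 2 * α * (1/τ^2) + (8) * sin x ^ 2 * cos x ^ 3 * cos θ ^ 2 * α * (1/κ) + (4) * sin x ^ 2 * cos x ^ 3 * cos θ ^ 4 * α * (1/κ) + (-2) * sin x ^ 2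 * cos x ^ 3 * sin θ ^ 2 * α * (1/τ^2) + (8) * sin x ^ 2 * cos x ^ 3 * sin θ ^ 2 * α * (1/κ) + (8) * sin x ^ 2 * cos x ^ 3 * sin θ ^ 2 * cos θ ^ 2 * α * (1/κ) + (4) * sin x ^ 2 * cos x ^ 3 * sin θ ^ 4 * α * (1/κ) + (2) * sin x ^ 2 * cos x ^ 5 * cos θ ^ 2 * α * (1/τ^2) + (-8) * sin x ^ 2 * cos x ^ 5 * cos θ ^ 2 * α * (1/κ) + (2) * sin x ^ 2 * cos x ^ 5 * sin θ ^ 2 * α * (1/τ^2) + (-8) * sin x ^ 2 * cos x ^ 5 * sin θ ^ 2 * α * (1/κ)) * py + ((-4) * cos x * α * (1/κ) + (4) * cos x * cos θ ^ 2 * α * (1/κ) + (12) * cos x ^ 3 * α * (1/κ) + (-16) * cos x ^ 3 * τ ^ 2 * α * (1/κ) ^ 2 + (-4) * cos x ^ 3 * cos θ ^ 2 * α * (1/κ) + (-16) * cos x ^ 3 * cos θ ^ 2 * τ ^ 2 * α * (1/κ) ^ 2 + (4) * cos x ^ 3 * sin θ ^ 2 * α * (1/κ) + (-16) * cos x ^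 3 * sin θ ^ 2 * τ ^ 2 * α * (1/κ) ^ 2 + (-8) * cos x ^ 3 * cos y ^ 2 * α * (1/κ) + (4) * cos x ^ 3 * cos y ^ 4 * α * (1/κ) + (-4) * cos x ^ 3 * sin y ^ 2 * α * (1/κ) + (4) * cos x ^ 3 * sin y ^ 2 * cos y ^ 2 * α * (1/κ) + (-8) * cos x ^ 5 * α * (1/κ) + (16) * cos x ^ 5 * τ ^ 2 * α * (1/κ) ^ 2 + (16) * cos x ^ 5 * cos θ ^ 2 * τ ^ 2 * α * (1/κ) ^ 2 + (-4) * cos x ^ 5 * sin θ ^ 2 * α * (1/κ) + (16) * cos x ^ 5 * sin θ ^ 2 * τ ^ 2 * α * (1/κ) ^ 2 + (16) * cos x ^ 5 * cos y ^ 2 * α * (1/κ) + (-32) * cos x ^ 5 * cos y ^ 2 * τ ^ 2 * α * (1/κ) ^ 2 + (-8) * cos x ^ 5 * cos y ^ 4 * α * (1/κ) + (16) * cos x ^ 5 * cos y ^ 4 * τ ^ 2 * α * (1/κ) ^ 2 + (8) * cos x ^ 5 * sin y ^ 2 * α * (1/κ) + (-16) * cos x ^ 5 * sin y ^ 2 *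 τ ^ 2 * α * (1/κ) ^ 2 + (-8) * cos x ^ 5 * sin y ^ 2 * cos y ^ 2 * α * (1/κ) + (16) * cos x ^ 5 * sin y ^ 2 * cos y ^ 2 * τ ^ 2 * α * (1/κ) ^ 2 + (4) * sin x ^ 2 * cos x * α * (1/κ) + sin x ^ 2 * cos x * cos θ ^ 2 * α * (1/τ^2) + (-12) * sin x ^ 2 * cos x * cos θ ^ 2 * α * (1/κ) + (-4) * sin x ^ 2 * cos x * sin θ ^ 2 * α * (1/κ) + (-1) * sin x ^ 2 * cos x ^ 3 * α * (1/τ^2) + (-2) * sin x ^ 2 * cos x ^ 3 * cos θ ^ 2 * α * (1/τ^2) + (16) * sin x ^ 2 * cos x ^ 3 * cos θ ^ 2 * α * (1/κ) + (4) * sin x ^ 2 * cos x ^ 3 * sin θ ^ 2 * α * (1/κ) + sin x ^ 2 * cos x ^ 5 * α * (1/τ^2) + (-4) * sin x ^ 2 * cos x ^ 5 * α * (1/κ) + sin x ^ 2 * cos x ^ 5 * cos θ ^ 2 * α * (1/τ^2) + (-4) * sin x ^ 2 * cos x ^ 5 * cos θ ^ 2 * α * (1/κ) + (-2) * sin x ^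 4 * cos x * cos θ ^ 2 * α * (1/τ^2) + (8) * sin x ^ 4 * cos x * cos θ ^ 2 * α * (1/κ) + (-1) * sin x ^ 4 * cos x * sin θ ^ 2 * α * (1/τ^2) + (4) * sin x ^ 4 * cos x * sin θ ^ 2 * α * (1/κ) + (2) * sin x ^ 4 * cos x ^ 3 * cos θ ^ 2 * α * (1/τ^2) + (-8) * sin x ^ 4 * cos x ^ 3 * cos θ ^ 2 * α * (1/κ) + sin x ^ 4 * cos x ^ 3 * sin θ ^ 2 * α * (1/τ^2) + (-4) * sin x ^ 4 * cos x ^ 3 * sin θ ^ 2 * α * (1/κ)) * pθ + (sin x ^ 2 * cos x ^ 3 * cos y ^ 2 * α * (1/τ^2) + sin x ^ 2 * cos x ^ 3 * sin y ^ 2 * α * (1/τ^2) + (-1) * sin x ^ 2 * cos x ^ 5 * cos y ^ 4 * α * (1/τ^2) + (4) * sin x ^ 2 * cos x ^ 5 * cos y ^ 4 * τ ^ 2 * α * (1/κ) * (1/τ^2) + (-2) * sin x ^ 2 * cos x ^ 5 * sin y ^ 2 * cos y ^ 2 * α * (1/τ^2) + (8) * sin x ^ 2 * cos x ^ 5 *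 sin y ^ 2 * cos y ^ 2 * τ ^ 2 * α * (1/κ) * (1/τ^2) + (-1) * sin x ^ 2 * cos x ^ 5 * sin y ^ 4 * α * (1/τ^2) + (4) * sin x ^ 2 * cos x ^ 5 * sin y ^ 4 * τ ^ 2 * α * (1/κ) * (1/τ^2) + sin x ^ 4 * cos x * cos θ ^ 2 * α * (1/τ^2) + sin x ^ 4 * cos x * sin θ ^ 2 * α * (1/τ^2) + (-2) * sin x ^ 4 * cos x ^ 3 * cos y ^ 2 * cos θ ^ 2 * α * (1/τ^2) + (8) * sin x ^ 4 * cos x ^ 3 * cos y ^ 2 * cos θ ^ 2 * τ ^ 2 * α * (1/κ) * (1/τ^2) + (-2) * sin x ^ 4 * cos x ^ 3 * cos y ^ 2 * sin θ ^ 2 * α * (1/τ^2) + (8) * sin x ^ 4 * cos x ^ 3 * cos y ^ 2 * sin θ ^ 2 * τ ^ 2 * α * (1/κ) * (1/τ^2) + (-2) * sin x ^ 4 * cos x ^ 3 * sin y ^ 2 * cos θ ^ 2 * α * (1/τ^2) + (8) * sin x ^ 4 * cos x ^ 3 * sin y ^ 2 * cos θ ^ 2 * τ ^ 2 * α * (1/κ)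 * (1/τ^2) + (-2) * sin x ^ 4 * cos x ^ 3 * sin y ^ 2 * sin θ ^ 2 * α * (1/τ^2) + (8) * sin x ^ 4 * cos x ^ 3 * sin y ^ 2 * sin θ ^ 2 * τ ^ 2 * α * (1/κ) * (1/τ^2) + (-1) * sin x ^ 6 * cos x * cos θ ^ 4 * α * (1/τ^2) + (4) * sin x ^ 6 * cos x * cos θ ^ 4 * τ ^ 2 * α * (1/κ) * (1/τ^2) + (-2) * sin x ^ 6 * cos x * sin θ ^ 2 * cos θ ^ 2 * α * (1/τ^2) + (8) * sin x ^ 6 * cos x * sin θ ^ 2 * cos θ ^ 2 * τ ^ 2 * α * (1/κ) * (1/τ^2) + (-1) * sin x ^ 6 * cos x * sin θ ^ 4 * α * (1/τ^2) + (4) * sin x ^ 6 * cos x * sin θ ^ 4 * τ ^ 2 * α * (1/κ) * (1/τ^2)) * hK + ((4) * sin x ^ 2 * cos x ^ 5 * cos y ^ 4 * α * (1/κ) + (8) * sin x ^ 2 * cos x ^ 5 * sin y ^ 2 * cos y ^ 2 * α * (1/κ) + (4) * sin x ^ 2 * cos x ^ 5 * sin y ^ 4 * α * (1/κ) + (8)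 * sin x ^ 4 * cos x ^ 3 * cos y ^ 2 * cos θ ^ 2 * α * (1/κ) + (8) * sin x ^ 4 * cos x ^ 3 * cos y ^ 2 * sin θ ^ 2 * α * (1/κ) + (8) * sin x ^ 4 * cos x ^ 3 * sin y ^ 2 * cos θ ^ 2 * α * (1/κ) + (8) * sin x ^ 4 * cos x ^ 3 * sin y ^ 2 * sin θ ^ 2 * α * (1/κ) + (4) * sin x ^ 6 * cos x * cos θ ^ 4 * α * (1/κ) + (8) * sin x ^ 6 * cos x * sin θ ^ 2 * cos θ ^ 2 * α * (1/κ) + (4) * sin x ^ 6 * cos x * sin θ ^ 4 * α * (1/κ)) * hT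

lemma metII_g (κ τ θ x y α : ℝ) (hκ : κ ≠ 0) (hτ : τ ≠ 0)
    (hα : Real.sqrt (2 * κ * τ ^ 2 / (κ + 4 * τ ^ 2 - (κ - 4 * τ ^ 2) * cos (2 * x))) = α) :
    bergerMet κ τ (ψeq θ x y)
      (bergerCovDeriv κ τ (fun t => ψeq θ x t) (fun t => ψeqy θ x t) y)
      (equatorNormal κ τ θ x y) = 0 := by
  have px := sin_sq_add_cos_sq x
  have py := sin_sq_add_cos_sq y
  have pθ := sin_sq_add_cos_sq θ
  have hK : κ * (1/κ) = 1 := by field_simp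
  have hT : τ^2 * (1/τ^2) = 1 := by field_simp
  rw [cov_yy]
  simp only [bergerMet, equatorNormal]
  rw [hα, sin_add, cos_add]
  simp only [frame1_psi, frame2_psi, hopf_psi, e4_smul, e4_add, inner_e4]
  linear_combination 0


/-- The equator in the Berger sphere S³_B(κ,τ) is minimal (`H = 0`)
and its extrinsic curvature is
`K_e = −4τ²(κ − 4τ²)² cos⁴x / (κ + 4τ² − (κ − 4τ²)cos 2x)²`. -/
theorem equator_minimal_and_extrinsic_curvature (κ τ θ x y : ℝ)
    (hκ : 0 < κ) (hτ : τ ≠ 0) :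
    Heq κ τ θ x y = 0 ∧
    Keq κ τ θ x y =
      -(4 * τ ^ 2 * (κ - 4 * τ ^ 2) ^ 2 * (cos x) ^ 4) /
        (κ + 4 * τ ^ 2 - (κ - 4 * τ ^ 2) * cos (2 * x)) ^ 2 := by
  have px := sin_sq_add_cos_sq x
  have ht2 : (0:ℝ) < τ ^ 2 := lt_of_le_of_ne (sq_nonneg τ) (Ne.symm (pow_ne_zero 2 hτ))
  have hD : 0 < κ + 4 * τ ^ 2 - (κ - 4 * τ ^ 2) * cos (2 * x) := by
    rw [cos_two_mul]
    have hc1 : cos x ^ 2 ≤ 1 := cos_sq_le_one x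
    have hc0 : (0:ℝ) ≤ cos x ^ 2 := sq_nonneg _
    nlinarith [mul_pos hκ ht2, mul_nonneg (mul_nonneg hκ.le hκ.le) (sub_nonneg.2 hc1),
      mul_nonneg (mul_nonneg ht2.le ht2.le) hc0]
  obtain ⟨α, hα⟩ : ∃ a, Real.sqrt (2 * κ * τ ^ 2 /
      (κ + 4 * τ ^ 2 - (κ - 4 * τ ^ 2) * cos (2 * x))) = a := ⟨_, rfl⟩
  have hα2 : α ^ 2 = 2 * κ * τ ^ 2 / (κ + 4 * τ ^ 2 - (κ - 4 * τ ^ 2) * cos (2 * x)) := by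
    rw [← hα]
    exact Real.sq_sqrt (div_nonneg (by positivity) hD.le)
  have hI : Ieq κ τ θ x y = (4/κ, 0, 4/κ * (cos x^2 * (sin x^2 + 4*τ^2/κ * cos x^2))) := by
    unfold Ieq; rw [metE, metF, metG]
  have hII : IIeq κ τ θ x y = (0, -(4/κ * α * (4*τ^2/κ - 1) * cos x^3), 0) := by
    unfold IIeq
    rw [metII_e, metII_f κ τ θ x y α hκ.ne' hτ hα, metII_g κ τ θ x y α hκ.ne' hτ hα]
  constructor
  · have hH : Heq κ τ θ x y =
        ((Ieq κ τ θ x y).1 * (IIeq κ τ θ x y).2.2 -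
          2 * (Ieq κ τ θ x y).2.1 * (IIeq κ τ θ x y).2.1 +
          (Ieq κ τ θ x y).2.2 * (IIeq κ τ θ x y).1) /
        (2 * ((Ieq κ τ θ x y).1 * (Ieq κ τ θ x y).2.2 - (Ieq κ τ θ x y).2.1 ^ 2)) := rfl
    rw [hH, hI, hII]
    norm_num
  · have hK : Keq κ τ θ x y =
        ((IIeq κ τ θ x y).1 * (IIeq κ τ θ x y).2.2 - (IIeq κ τ θ x y).2.1 ^ 2) /
        ((Ieq κ τ θ x y).1 * (Ieq κ τ θ x y).2.2 - (Ieq κ τ θ x y).2.1 ^ 2) := rfl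
    rw [hK, hI, hII]
    simp only
    by_cases hc : cos x = 0
    · rw [hc]; norm_num
    · have hcx2 : 0 < cos x ^ 2 := lt_of_le_of_ne (sq_nonneg _) (Ne.symm (pow_ne_zero 2 hc))
      have hsum : 0 < sin x ^ 2 + 4 * τ ^ 2 / κ * cos x ^ 2 :=
        add_pos_of_nonneg_of_pos (sq_nonneg _)
          (mul_pos (div_pos (by positivity) hκ) hcx2)
      have hD' : 0 < κ + 4 * τ ^ 2 - (κ - 4 * τ ^ 2) * (2 * cos x ^ 2 - 1) := by
        rw [← cos_two_mul]; exact hD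
      have hEGpos : 0 < 4/κ * (4/κ * (cos x^2 * (sin x^2 + 4*τ^2/κ * cos x^2))) - (0:ℝ)^2 := by
        rw [show ((0:ℝ)^2) = 0 by norm_num, sub_zero]
        exact mul_pos (div_pos (by norm_num) hκ)
          (mul_pos (div_pos (by norm_num) hκ) (mul_pos hcx2 hsum))
      rw [div_eq_div_iff hEGpos.ne' (pow_ne_zero 2 hD.ne')]
      have hf2 : (-(4/κ * α * (4*τ^2/κ - 1) * cos x^3))^2 =
          (4/κ)^2 * (2*κ*τ^2/(κ + 4*τ^2 - (κ - 4*τ^2)*cos (2*x))) * (4*τ^2/κ - 1)^2 *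
            (cos x^3)^2 := by
        rw [← hα2]; ring
      rw [hf2, cos_two_mul]
      field_simp
      linear_combination ((-2048) * cos x ^ 6 * κ ^ 6 * τ ^ 6 + (1024) * cos x ^ 6 * κ ^ 7 * τ ^ 4 + (-128) * cos x ^ 6 * κ ^ 8 * τ ^ 2 + (-8192) * cos x ^ 8 * κ ^ 5 * τ ^ 8 + (6144) * cos x ^ 8 * κ ^ 6 * τ ^ 6 + (-1536) * cos x ^ 8 * κ ^ 7 * τ ^ 4 + (128) * cos x ^ 8 * κ ^ 8 * τ ^ 2) * px + (1024 * κ * τ ^ 6 * cos x ^ 6 - 512 * κ ^ 2 * τ ^ 4 * cos x ^ 6 + 64 * κ ^ 3 * τ ^ 2 * cos x ^ 6 + 8192 * κ ^ 5 * τ ^ 8 * cos x ^ 8 + 2048 * κ ^ 6 * τ ^ 6 * cos x ^ 6 - 6144 * κ ^ 6 * τ ^ 6 * cos x ^ 8 - 1024 * κ ^ 7 * τ ^ 4 * cos x ^ 6 + 1536 * κ ^ 7 * τ ^ 4 * cos x ^ 8 + 128 * κ ^ 8 * τ ^ 2 * cos x ^ 6 - 128 * κ ^ 8 * τ ^ 2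 * cos x ^ 8) * px
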